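/- For a typed solos term P satisfying (AC1), (AC2), (AC3) which reduces to Q: if the subject of a solo s of P is modified by the reduction (its residue in Q has a different subject), then the residue of s is a root in Q, and moreover s is a root in P or s₀ ◁ s or t₀ ◁ s, where s₀ and t₀ are the interacting solos. -/
import Mathlib


/-- Communication protocols carried by object occurrences: Send and Receive. -/
inductive Proto : Type
  | S : Proto
  | R : Proto
deriving DecidableEq

/-- A (protocol-decorated) triadic solo: a polarity (`inp = true` for input),
a subject name and three object names each decorated with a protocol. -/
structure Solo where
  inp : Bool
  subj : ℕ
  objs : Fin 3 → ℕ × Proto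
deriving DecidableEq

/-- A solos term in canonical form: a finite set of restricted (bound) names
together with a multiset of solos in parallel. -/
structure CTerm where
  bound : Finset ℕ
  solos : Multiset Solo

/-- `x` has an object occurrence in `s`. -/
def Solo.objOcc (s : Solo) (x : ℕ) : Prop := ∃ i, (s.objs i).1 = x

/-- `x` has an `R`-occurrence in `s` (written `s ◁ x`). -/
def Solo.hasR (s : Solo) (x : ℕ) : Prop := ∃ i, s.objs i = (x, Proto.R)

/-- `x` has an `S`-occurrence in `s`. -/
def Solo.hasS (s : Solo) (x : ℕ) : Prop := ∃ i, s.objs i = (x, Proto.S)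

/-- `s ◁ t` : the subject of `t` has an `R`-occurrence in `s`. -/
def Solo.ltS (s t : Solo) : Prop := s.hasR t.subj

/-- Dual solos: same subject, opposite polarities. -/
def Dual (s t : Solo) : Prop := s.subj = t.subj ∧ s.inp ≠ t.inp

/-- `s` is a root of `P`: no solo `t` of `P` satisfies `t ◁ s`. -/
def CTerm.IsRoot (P : CTerm) (s : Solo) : Prop := ∀ t ∈ P.solos, ¬ t.ltS s

/-- The relation `◁` restricted to the solos of `P`. -/
def CTerm.lt (P : CTerm) (s t : Solo) : Prop :=
  s ∈ P.solos ∧ t ∈ P.solos ∧ s.ltS t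

/-- The number of `R`-occurrences of the name `x` in `P`. -/
def CTerm.Rocc (P : CTerm) (x : ℕ) : ℕ :=
  (P.solos.map
    (fun s => (Finset.univ.filter (fun i => s.objs i = (x, Proto.R))).card)).sum

/-- (AC1): each name has at most one `R`-occurrence. -/
def AC1 (P : CTerm) : Prop := ∀ x : ℕ, P.Rocc x ≤ 1

/-- (AC2): two dual solos are both roots. -/
def AC2 (P : CTerm) : Prop :=
  ∀ s ∈ P.solos, ∀ t ∈ P.solos, Dual s t → P.IsRoot s ∧ P.IsRoot t

/-- (AC3): `s ◁ x` and `x` occurring as object in `t` implies `s ◁* t`. -/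
def AC3 (P : CTerm) : Prop :=
  ∀ s ∈ P.solos, ∀ t ∈ P.solos, ∀ x : ℕ,
    s.hasR x → t.objOcc x → Relation.ReflTransGen P.lt s t

/-- (AC4): a solo with both an `S`- and an `R`-occurrence of a name is an input. -/
def AC4 (P : CTerm) : Prop :=
  ∀ s ∈ P.solos, ∀ x : ℕ, s.hasS x → s.hasR x → s.inp = true

/-- (AC5): no free name has an `R`-occurrence. -/
def AC5 (P : CTerm) : Prop :=
  ∀ x : ℕ, x ∉ P.bound → ∀ s ∈ P.solos, ¬ s.hasR x

/-- Acyclic solos terms: conditions (AC1)–(AC5). -/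
def Acyclic (P : CTerm) : Prop := AC1 P ∧ AC2 P ∧ AC3 P ∧ AC4 P ∧ AC5 P

/-- Applying a name substitution to a solo (protocols are preserved). -/
def applySub (σ : ℕ → ℕ) (s : Solo) : Solo :=
  ⟨s.inp, σ s.subj, fun i => (σ (s.objs i).1, (s.objs i).2)⟩

/-- `MguData σ s0 t0 P` : `σ` is a most general unifier of the objects of the
dual solos `s0` and `t0`, modifying only bound names of `P`. -/
def MguData (σ : ℕ → ℕ) (s0 t0 : Solo) (P : CTerm) : Prop :=
  (∀ i, σ (s0.objs i).1 = σ (t0.objs i).1) ∧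
  (∀ w, σ w ≠ w → w ∈ P.bound) ∧
  (∀ w, σ (σ w) = σ w) ∧
  (∀ τ : ℕ → ℕ, (∀ i, τ (s0.objs i).1 = τ (t0.objs i).1) → ∀ w, τ (σ w) = τ w)

/-- One reduction step of the solos calculus in canonical form: two dual solos
`s0` and `t0` of `P` are erased and a most general unifier of their objects,
modifying only bound names, is applied to the remaining solos (the residues). -/
def Reduces (P Q : CTerm) : Prop :=
  ∃ (s0 t0 : Solo) (σ : ℕ → ℕ),
    s0 ∈ P.solos ∧ t0 ∈ P.solos.erase s0 ∧ Dual s0 t0 ∧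
    MguData σ s0 t0 P ∧
    Q.solos = ((P.solos.erase s0).erase t0).map (applySub σ) ∧
    Q.bound = P.bound.filter (fun w => σ w = w)

/-- If `σ` moves `w`, then `w` occurs as an object of `s0` or `t0`. -/
lemma claimA {σ : ℕ → ℕ} {s0 t0 : Solo} {P : CTerm} (h : MguData σ s0 t0 P)
    {w : ℕ} (hw : σ w ≠ w) : s0.objOcc w ∨ t0.objOcc w := by
  by_contra hc
  push_neg at hc
  obtain ⟨hc1, hc2⟩ := hc
  set τ : ℕ → ℕ := fun v => if v = w then w else σ v with hτ
  have hun : ∀ i, τ (s0.objs i).1 = τ (t0.objs i).1 := by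
    intro i
    have h1 : (s0.objs i).1 ≠ w := fun h => hc1 ⟨i, h⟩
    have h2 : (t0.objs i).1 ≠ w := fun h => hc2 ⟨i, h⟩
    simp only [hτ, if_neg h1, if_neg h2]
    exact h.1 i
  have h4 := h.2.2.2 τ hun w
  have e1 : τ (σ w) = σ w := by simp only [hτ, if_neg hw, h.2.2.1 w]
  have e2 : τ w = w := by simp [hτ]
  rw [e1, e2] at h4
  exact hw h4

/-- If `σ` moves `w`, then `σ w` occurs as an object of `s0` or `t0`. -/
lemma claimB {σ : ℕ → ℕ} {s0 t0 : Solo} {P : CTerm} (h : MguData σ s0 t0 P)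
    {w : ℕ} (hw : σ w ≠ w) : s0.objOcc (σ w) ∨ t0.objOcc (σ w) := by
  by_contra hc
  push_neg at hc
  obtain ⟨hc1, hc2⟩ := hc
  set τ : ℕ → ℕ := fun v => if v = σ w then w else σ v with hτ
  have hun : ∀ i, τ (s0.objs i).1 = τ (t0.objs i).1 := by
    intro i
    have h1 : (s0.objs i).1 ≠ σ w := fun h => hc1 ⟨i, h⟩
    have h2 : (t0.objs i).1 ≠ σ w := fun h => hc2 ⟨i, h⟩
    simp only [hτ, if_neg h1, if_neg h2]
    exact h.1 i
  have h4 := h.2.2.2 τ hun w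
  have e1 : τ (σ w) = w := by simp [hτ]
  have e2 : τ w = σ w := by
    have : w ≠ σ w := fun h => hw h.symm
    simp only [hτ, if_neg this]
  rw [e1, e2] at h4
  exact hw h4.symm

/-- Under (AC3), a solo with an `R`-occurrence of a name occurring as an
object of a root must be that root. -/
lemma root_forces {P : CTerm} (h3 : AC3 P) {u t : Solo} (hu : u ∈ P.solos)
    (hroot : P.IsRoot u) (ht : t ∈ P.solos) {x : ℕ} (htx : t.hasR x)
    (hux : u.objOcc x) : t = u := by
  have h := h3 t ht u hu x htx hux
  rcases Relation.ReflTransGen.cases_tail h with h | ⟨c, _, hc⟩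
  · exact h.symm
  · exact absurd hc.2.2 (hroot c hc.1)

/-- Under (AC1), no solo with an `R`-occurrence appears twice. -/
lemma two_copies {P : CTerm} (h1 : AC1 P) {u : Solo} {x : ℕ}
    (hcount : 2 ≤ P.solos.count u) (hR : u.hasR x) : False := by
  have hle : Multiset.replicate 2 u ≤ P.solos :=
    Multiset.le_count_iff_replicate_le.mp hcount
  obtain ⟨rest, hrest⟩ := Multiset.le_iff_exists_add.mp hle
  obtain ⟨i, hi⟩ := hR
  have hc : 1 ≤ (Finset.univ.filter (fun j => u.objs j = (x, Proto.R))).card :=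
    Finset.card_pos.mpr ⟨i, by simp [hi]⟩
  have hA := h1 x
  unfold CTerm.Rocc at hA
  rw [hrest] at hA
  simp only [Multiset.replicate_succ, Multiset.replicate_one, Multiset.cons_add,
    Multiset.map_cons, Multiset.sum_cons] at hA
  omega

/-- Under (AC1)–(AC3), if the subject of a solo `s` of `P` is
modified by the reduction between the dual solos `s0` and `t0`, then the residue
of `s` is a root in the reduct `Q`, and `s` is a root in `P` or `s0 ◁ s` or
`t0 ◁ s`. -/
theorem stmt12 (P Q : CTerm) (h1 : AC1 P) (h2 : AC2 P) (h3 : AC3 P)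
    (s0 t0 : Solo) (σ : ℕ → ℕ)
    (hs0 : s0 ∈ P.solos) (ht0 : t0 ∈ P.solos.erase s0) (hdual : Dual s0 t0)
    (hmgu : MguData σ s0 t0 P)
    (hQ : Q.solos = ((P.solos.erase s0).erase t0).map (applySub σ))
    (hQb : Q.bound = P.bound.filter (fun w => σ w = w))
    (s : Solo) (hs : s ∈ (P.solos.erase s0).erase t0)
    (hmod : σ s.subj ≠ s.subj) :
    Q.IsRoot (applySub σ s) ∧ (P.IsRoot s ∨ s0.ltS s ∨ t0.ltS s) := by
  have ht0P : t0 ∈ P.solos := Multiset.mem_of_mem_erase ht0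
  obtain ⟨r0, r1⟩ := h2 s0 hs0 t0 ht0P hdual
  constructor
  · -- the residue of s is a root in Q
    intro t' ht' hlt'
    rw [hQ] at ht'
    obtain ⟨t, ht, rfl⟩ := Multiset.mem_map.mp ht'
    obtain ⟨i, hi⟩ := hlt'
    set x := (t.objs i).1 with hxdef
    have hx1 : σ x = σ s.subj := congrArg Prod.fst hi
    have hx2 : (t.objs i).2 = Proto.R := congrArg Prod.snd hi
    have htR : t.hasR x := ⟨i, Prod.ext rfl hx2⟩
    have htP : t ∈ P.solos :=
      Multiset.mem_of_mem_erase (Multiset.mem_of_mem_erase ht)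
    have hxocc : s0.objOcc x ∨ t0.objOcc x := by
      by_cases hxm : σ x = x
      · have hxe : x = σ s.subj := by rw [← hx1, hxm]
        rw [hxe]; exact claimB hmgu hmod
      · exact claimA hmgu hxm
    rcases hxocc with hocc | hocc
    · have hts : t = s0 := root_forces h3 hs0 r0 htP htR hocc
      subst hts
      have hmem : t ∈ P.solos.erase t :=
        Multiset.mem_of_le (Multiset.erase_le _ _) ht
      have : 2 ≤ P.solos.count t := by
        have := Multiset.count_pos.mpr hmem
        rw [Multiset.count_erase_self] at this
        omega
      exact two_copies h1 this htR
    · have hts : t = t0 := root_forces h3 ht0P r1 htP htR hocc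
      subst hts
      have hmem : t ∈ (P.solos.erase s0).erase t := ht
      have h2c : 2 ≤ (P.solos.erase s0).count t := by
        have hp := Multiset.count_pos.mpr hmem
        rw [Multiset.count_erase_self] at hp
        omega
      have : 2 ≤ P.solos.count t :=
        le_trans h2c (Multiset.count_le_of_le _ (Multiset.erase_le _ _))
      exact two_copies h1 this htR
  · -- s is a root of P, or s0 ◁ s, or t0 ◁ s
    by_cases hroot : P.IsRoot s
    · exact Or.inl hroot
    · unfold CTerm.IsRoot at hroot
      push_neg at hroot
      obtain ⟨t, htP, htlt⟩ := hroot
      have hocc := claimA hmgu hmod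
      rcases hocc with hocc | hocc
      · have := root_forces h3 hs0 r0 htP htlt hocc
        exact Or.inr (Or.inl (this ▸ htlt))
      · have := root_forces h3 ht0P r1 htP htlt hocc
        exact Or.inr (Or.inr (this ▸ htlt))
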